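/- Consider the chain complexes of abelian groups: A with A_1 = A_0 = ℤ and differential multiplication by 8; B with B_1 = B_0 = ℤ and differential multiplication by 4; C with C_2 = C_1 = ℤ and differential multiplication by 4; D with D_2 = ℤ (all other terms 0). Let f : A → B have f_1 = 2 and f_0 = 1, let g : B → C have sole nonzero component g_1 = 2 : B_1 → C_1, and let h : C → D have sole nonzero component h_2 = 1 : C_2 → D_2. Then f, g, h are chain maps, g∘f and h∘g are nullhomotopic, and for EVERY nullhomotopy S of g∘f and EVERY nullhomotopy T of h∘g, the Toda map φ(S,T) : ΣA → D is not chain homotopic to zero. (Hence the Toda bracket ⟨h,g,f⟩ does not vanish.) -/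

import Mathlib

/-! STATEMENT 18.  Chain complexes of abelian groups are encoded as families
`M r : ℤ → Type`, `(M r) m = Fin (r m) → ℤ` (so `r m` copies of `ℤ` in degree `m`),
with differentials `d m : (M r) (m+1) →ₗ[ℤ] (M r) m` given by integer matrices. -/

abbrev M (r : ℤ → ℕ) (m : ℤ) : Type := Fin (r m) → ℤ

/-- A has ℤ in degrees 0 and 1 -/
def rA : ℤ → ℕ := fun m => if m = 0 ∨ m = 1 then 1 else 0
/-- B has ℤ in degrees 0 and 1 -/
def rB : ℤ → ℕ := fun m => if m = 0 ∨ m = 1 then 1 else 0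
/-- C has ℤ in degrees 1 and 2 -/
def rC : ℤ → ℕ := fun m => if m = 1 ∨ m = 2 then 1 else 0
/-- D has ℤ in degree 2 only -/
def rD : ℤ → ℕ := fun m => if m = 2 then 1 else 0

/-- A = (ℤ --8--> ℤ) in degrees 1 → 0 -/
noncomputable def dA (m : ℤ) : M rA (m+1) →ₗ[ℤ] M rA m :=
  Matrix.mulVecLin (Matrix.of fun _ _ => if m = 0 then (8:ℤ) else 0)

/-- B = (ℤ --4--> ℤ) in degrees 1 → 0 -/
noncomputable def dB (m : ℤ) : M rB (m+1) →ₗ[ℤ] M rB m :=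
  Matrix.mulVecLin (Matrix.of fun _ _ => if m = 0 then (4:ℤ) else 0)

/-- C = (ℤ --4--> ℤ) in degrees 2 → 1 -/
noncomputable def dC (m : ℤ) : M rC (m+1) →ₗ[ℤ] M rC m :=
  Matrix.mulVecLin (Matrix.of fun _ _ => if m = 1 then (4:ℤ) else 0)

/-- D is concentrated in degree 2, so its differential is 0 -/
noncomputable def dD (m : ℤ) : M rD (m+1) →ₗ[ℤ] M rD m :=
  Matrix.mulVecLin (Matrix.of fun _ _ => (0:ℤ))

/-- f : A → B with f₁ = 2, f₀ = 1 -/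
noncomputable def fm (m : ℤ) : M rA m →ₗ[ℤ] M rB m :=
  Matrix.mulVecLin (Matrix.of fun _ _ => if m = 1 then (2:ℤ) else if m = 0 then 1 else 0)

/-- g : B → C with sole nonzero component g₁ = 2 : B₁ → C₁ -/
noncomputable def gm (m : ℤ) : M rB m →ₗ[ℤ] M rC m :=
  Matrix.mulVecLin (Matrix.of fun _ _ => if m = 1 then (2:ℤ) else 0)

/-- h : C → D with sole nonzero component h₂ = 1 : C₂ → D₂ -/
noncomputable def hm (m : ℤ) : M rC m →ₗ[ℤ] M rD m :=
  Matrix.mulVecLin (Matrix.of fun _ _ => if m = 2 then (1:ℤ) else 0)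

/-! Every component involved is a map between copies of `ℤ`, i.e. an integer. Let `s` be the
integer of `S₁ : A₁ → C₂`. In degree 1 the equation `g ∘ f = ∂S + S∂` reads `4 = 4s + 8c`, so `s`
is odd. The Toda map on `A₁ → D₂` is `s - 2t`; as `∂_D = 0`, a nullhomotopy `U` of it gives
`s - 2t = -8u`, so `s` would be even. -/

namespace Matrix

variable {R : Type*} [CommSemiring R] {l m n : Type*}

theorem of_const_mul_of_const [Fintype m] (a b : R) :
    (of fun (_ : l) (_ : m) => a) * (of fun (_ : m) (_ : n) => b) =
      of fun _ _ => (Fintype.card m : R) * a * b := by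
  ext i k
  simp [mul_apply, mul_assoc]

theorem mulVecLin_of_const_comp [Fintype m] [Fintype n] (a b : R) :
    (mulVecLin (of fun (_ : l) (_ : m) => a)).comp (mulVecLin (of fun (_ : m) (_ : n) => b)) =
      mulVecLin (of fun _ _ => (Fintype.card m : R) * a * b) := by
  rw [← mulVecLin_mul, of_const_mul_of_const]

theorem mulVecLin_of_const_comp_eq_comp [Fintype n] {k k' : ℕ} {a b c d : R}
    (h : (k : R) * a * b = k' * c * d) :
    (mulVecLin (of fun (_ : l) (_ : Fin k) => a)).comp
        (mulVecLin (of fun (_ : Fin k) (_ : n) => b)) =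
      (mulVecLin (of fun (_ : l) (_ : Fin k') => c)).comp
        (mulVecLin (of fun (_ : Fin k') (_ : n) => d)) := by
  simp only [mulVecLin_of_const_comp, Fintype.card_fin, h]

theorem mulVecLin_of_const_comp_eq_zero [Fintype n] {k : ℕ} {a b : R}
    (h : (k : R) * a * b = 0) :
    (mulVecLin (of fun (_ : l) (_ : Fin k) => a)).comp
      (mulVecLin (of fun (_ : Fin k) (_ : n) => b)) = 0 := by
  simp only [mulVecLin_of_const_comp, Fintype.card_fin, h]
  exact mulVecLin_zero

theorem mulVecLin_of_const_add [Fintype n] (a b : R) :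
    mulVecLin (of fun (_ : m) (_ : n) => a) + mulVecLin (of fun _ _ => b) =
      mulVecLin (of fun _ _ => a + b) := by
  rw [← mulVecLin_add]
  rfl

theorem mulVecLin_of_const_apply [Fintype n] (a : R) (v : n → R) :
    mulVecLin (of fun (_ : m) (_ : n) => a) v = (a * ∑ j, v j) • 1 := by
  ext i
  simp [mulVec, dotProduct, Finset.mul_sum]

end Matrix

open Matrix

theorem dA_comp_dA (m : ℤ) : (dA m).comp (dA (m+1)) = 0 :=
  mulVecLin_of_const_comp_eq_zero (by simp only [rA]; split_ifs <;> omega)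

theorem dB_comp_dB (m : ℤ) : (dB m).comp (dB (m+1)) = 0 :=
  mulVecLin_of_const_comp_eq_zero (by simp only [rB]; split_ifs <;> omega)

theorem dC_comp_dC (m : ℤ) : (dC m).comp (dC (m+1)) = 0 :=
  mulVecLin_of_const_comp_eq_zero (by simp only [rC]; split_ifs <;> omega)

theorem dD_comp_dD (m : ℤ) : (dD m).comp (dD (m+1)) = 0 :=
  mulVecLin_of_const_comp_eq_zero (by simp)

theorem dB_comp_fm (m : ℤ) : (dB m).comp (fm (m+1)) = (fm m).comp (dA m) :=
  mulVecLin_of_const_comp_eq_comp (by simp only [rA, rB]; split_ifs <;> omega)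

theorem dC_comp_gm (m : ℤ) : (dC m).comp (gm (m+1)) = (gm m).comp (dB m) :=
  mulVecLin_of_const_comp_eq_comp (by simp only [rB, rC]; split_ifs <;> omega)

theorem dD_comp_hm (m : ℤ) : (dD m).comp (hm (m+1)) = (hm m).comp (dC m) :=
  mulVecLin_of_const_comp_eq_comp (by simp only [rC, rD]; split_ifs <;> omega)

theorem hm_comp_gm (m : ℤ) : (hm m).comp (gm m) = 0 :=
  mulVecLin_of_const_comp_eq_zero (by simp only [rC]; split_ifs <;> omega)

noncomputable def gfHomotopy (t : ℤ) : M rA t →ₗ[ℤ] M rC (t+1) :=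
  Matrix.mulVecLin (Matrix.of fun _ _ => if t = 1 then (1:ℤ) else 0)

theorem gm_comp_fm_eq_homotopy (t : ℤ) :
    (gm (t+1)).comp (fm (t+1)) =
      (dC (t+1)).comp (gfHomotopy (t+1)) + (gfHomotopy t).comp (dA t) := by
  simp only [gm, fm, dC, dA, gfHomotopy, mulVecLin_of_const_comp, mulVecLin_of_const_add,
    Fintype.card_fin]
  congr 2 with _ _
  simp only [rA, rB, rC]
  split_ifs <;> omega

/- Summing the coordinates of a vector of `C₂ = ℤ` reads off its single entry, so
`∑ j, S (0+1) 1 j` is the integer `s` of `S₁`; the degree is written `0+1` to match `hS 0`. -/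
theorem odd_of_isNullhomotopy_gm_comp_fm (S : ∀ t : ℤ, M rA t →ₗ[ℤ] M rC (t+1))
    (hS : ∀ t : ℤ, (gm (t+1)).comp (fm (t+1)) = (dC (t+1)).comp (S (t+1)) + (S t).comp (dA t)) :
    Odd (∑ j, S (0+1) 1 j) := by
  have h := congrArg (fun w => ∑ i, w i) (LinearMap.congr_fun (hS 0) 1)
  simp only [LinearMap.comp_apply, LinearMap.add_apply, Pi.add_apply, gm, fm, dC, dA,
    mulVecLin_of_const_apply, map_smul, Pi.smul_apply, smul_eq_mul, Pi.one_apply,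
    Finset.sum_const, Finset.card_univ, Fintype.card_fin, nsmul_eq_mul, mul_one,
    Finset.sum_add_distrib, ← Finset.mul_sum] at h
  set s := ∑ j, S (0+1) 1 j
  have key : (4 : ℤ) = 4 * s + 8 * ∑ i, S 0 1 i := by simpa [rA, rB, rC] using h
  exact Int.odd_iff.mpr (by omega)

theorem even_of_isNullhomotopy_toda (S : ∀ t : ℤ, M rA t →ₗ[ℤ] M rC (t+1))
    (T : ∀ t : ℤ, M rB t →ₗ[ℤ] M rD (t+1)) (U : ∀ t : ℤ, M rA t →ₗ[ℤ] M rD (t+1+1))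
    (hU : ∀ t : ℤ, (hm (t+1+1)).comp (S (t+1)) - (T (t+1)).comp (fm (t+1))
      = (dD (t+1+1)).comp (U (t+1)) - (U t).comp (dA t)) :
    Even (∑ j, S (0+1) 1 j) := by
  have h := congrArg (fun w => ∑ i, w i) (LinearMap.congr_fun (hU 0) 1)
  simp only [LinearMap.comp_apply, LinearMap.sub_apply, Pi.sub_apply, hm, dD, fm, dA,
    mulVecLin_of_const_apply, map_smul, Pi.smul_apply, smul_eq_mul, Pi.one_apply,
    Finset.sum_const, Finset.card_univ, Fintype.card_fin, nsmul_eq_mul, mul_one,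
    Finset.sum_sub_distrib, ← Finset.mul_sum] at h
  set s := ∑ j, S (0+1) 1 j
  have key : s - 2 * ∑ i, T (0+1) 1 i = -(8 * ∑ i, U 0 1 i) := by simpa [rA, rD] using h
  exact Int.even_iff.mpr (by omega)

theorem statement18 :
    -- the four graded objects are chain complexes:
    (∀ m : ℤ, (dA m).comp (dA (m+1)) = 0) ∧ (∀ m : ℤ, (dB m).comp (dB (m+1)) = 0) ∧
    (∀ m : ℤ, (dC m).comp (dC (m+1)) = 0) ∧ (∀ m : ℤ, (dD m).comp (dD (m+1)) = 0) ∧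
    -- f, g, h are chain maps:
    (∀ m : ℤ, (dB m).comp (fm (m+1)) = (fm m).comp (dA m)) ∧
    (∀ m : ℤ, (dC m).comp (gm (m+1)) = (gm m).comp (dB m)) ∧
    (∀ m : ℤ, (dD m).comp (hm (m+1)) = (hm m).comp (dC m)) ∧
    -- g∘f is nullhomotopic:
    (∃ S : ∀ t : ℤ, M rA t →ₗ[ℤ] M rC (t+1),
      ∀ t : ℤ, (gm (t+1)).comp (fm (t+1)) = (dC (t+1)).comp (S (t+1)) + (S t).comp (dA t)) ∧
    -- h∘g is nullhomotopic:
    (∃ T : ∀ t : ℤ, M rB t →ₗ[ℤ] M rD (t+1),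
      ∀ t : ℤ, (hm (t+1)).comp (gm (t+1)) = (dD (t+1)).comp (T (t+1)) + (T t).comp (dB t)) ∧
    -- for EVERY such S and T, the Toda map φ(S,T) : ΣA → D, with components
    -- φ out of (ΣA)_{t+1} = A_t given by h∘S − T∘f, is not chain homotopic to zero
    -- (the suspension differential being −∂_A):
    (∀ (S : ∀ t : ℤ, M rA t →ₗ[ℤ] M rC (t+1)) (T : ∀ t : ℤ, M rB t →ₗ[ℤ] M rD (t+1)),
      (∀ t : ℤ, (gm (t+1)).comp (fm (t+1)) = (dC (t+1)).comp (S (t+1)) + (S t).comp (dA t)) →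
      (∀ t : ℤ, (hm (t+1)).comp (gm (t+1)) = (dD (t+1)).comp (T (t+1)) + (T t).comp (dB t)) →
      ¬ ∃ U : ∀ t : ℤ, M rA t →ₗ[ℤ] M rD (t+1+1),
          ∀ t : ℤ, (hm (t+1+1)).comp (S (t+1)) - (T (t+1)).comp (fm (t+1))
            = (dD (t+1+1)).comp (U (t+1)) - (U t).comp (dA t)) := by
  refine ⟨dA_comp_dA, dB_comp_dB, dC_comp_dC, dD_comp_dD, dB_comp_fm, dC_comp_gm, dD_comp_hm,
    ⟨gfHomotopy, gm_comp_fm_eq_homotopy⟩, ⟨0, fun t => ?_⟩, ?_⟩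
  · simpa only [Pi.zero_apply, LinearMap.comp_zero, LinearMap.zero_comp, add_zero] using
      hm_comp_gm (t+1)
  · rintro S T hS - ⟨U, hU⟩
    exact Int.not_even_iff_odd.mpr (odd_of_isNullhomotopy_gm_comp_fm S hS)
      (even_of_isNullhomotopy_toda S T U hU)
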